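/- In the ring R, the identity w2^(q^2+1) = (y^q)^(3q0)*w2*ℓ^q + y^(3q0)*w2*ℓ + w2^2 holds. -/
import Mathlib


noncomputable section

open MvPolynomial

abbrev F := ZMod 3

def q0 (s : ℕ) : ℕ := 3 ^ s
def q (s : ℕ) : ℕ := 3 ^ (2 * s + 1)

def ReeIdeal (s : ℕ) : Ideal (MvPolynomial (Fin 3) F) :=
  Ideal.span
    { X 1 ^ q s - X 1 - X 0 ^ q0 s * (X 0 ^ q s - X 0),
      X 2 ^ q s - X 2 - X 0 ^ q0 s * (X 1 ^ q s - X 1) }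

abbrev R (s : ℕ) : Type := MvPolynomial (Fin 3) F ⧸ ReeIdeal s

def x (s : ℕ) : R s := Ideal.Quotient.mk _ (X 0)
def y (s : ℕ) : R s := Ideal.Quotient.mk _ (X 1)
def z (s : ℕ) : R s := Ideal.Quotient.mk _ (X 2)

def w1 (s : ℕ) : R s := x s ^ (3 * q0 s + 1) - y s ^ (3 * q0 s)
def w2 (s : ℕ) : R s := x s * y s ^ (3 * q0 s) - z s ^ (3 * q0 s)
def w3 (s : ℕ) : R s := x s * z s ^ (3 * q0 s) - w1 s ^ (3 * q0 s)
def w4 (s : ℕ) : R s := x s * w2 s ^ q0 s - y s * w1 s ^ q0 s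
def v (s : ℕ) : R s := x s * w3 s ^ q0 s - z s * w1 s ^ q0 s
def w5 (s : ℕ) : R s := y s * w3 s ^ q0 s - z s * w2 s ^ q0 s
def w6 (s : ℕ) : R s := v s ^ (3 * q0 s) - w2 s ^ (3 * q0 s) + x s * w4 s ^ (3 * q0 s)
def w7 (s : ℕ) : R s := w2 s + v s
def w8 (s : ℕ) : R s := w5 s ^ (3 * q0 s) + x s * w7 s ^ (3 * q0 s)
def w9 (s : ℕ) : R s := w4 s * w2 s ^ q0 s - y s * w6 s ^ q0 s
def w10 (s : ℕ) : R s := z s * w6 s ^ q0 s - w3 s ^ q0 s * w4 s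
def ell (s : ℕ) : R s := x s ^ q s - x s

lemma three_eq_zero (s : ℕ) : (3 : R s) = 0 := by
  have h : (3 : MvPolynomial (Fin 3) F) = 0 := by
    have := CharP.cast_eq_zero (MvPolynomial (Fin 3) F) 3
    exact_mod_cast this
  have h2 : (3 : R s) = Ideal.Quotient.mk (ReeIdeal s) 3 :=
    (map_ofNat (Ideal.Quotient.mk (ReeIdeal s)) 3).symm
  rw [h2, h, map_zero]

lemma cube_add (s : ℕ) (a b : R s) : (a + b) ^ 3 = a ^ 3 + b ^ 3 := by
  have h3 := three_eq_zero s
  linear_combination (a ^ 2 * b + a * b ^ 2) * h3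

lemma frob_add (s n : ℕ) (a b : R s) :
    (a + b) ^ 3 ^ n = a ^ 3 ^ n + b ^ 3 ^ n := by
  induction n with
  | zero => simp
  | succ n ih =>
    rw [pow_succ, pow_mul, pow_mul, pow_mul, ih, cube_add]

lemma frob_sub (s n : ℕ) (a b : R s) :
    (a - b) ^ 3 ^ n = a ^ 3 ^ n - b ^ 3 ^ n := by
  have hodd : Odd (3 ^ n) := Odd.pow (by decide)
  rw [sub_eq_add_neg, frob_add, hodd.neg_pow b, sub_eq_add_neg]

lemma hx_rel (s : ℕ) : x s ^ q s = x s + ell s := by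
  unfold ell; ring

lemma hy_rel (s : ℕ) : y s ^ q s = y s + x s ^ q0 s * ell s := by
  have hmem : (X 1 ^ q s - X 1 - X 0 ^ q0 s * (X 0 ^ q s - X 0) :
      MvPolynomial (Fin 3) F) ∈ ReeIdeal s :=
    Ideal.subset_span (by left; rfl)
  have h0 := (Ideal.Quotient.eq_zero_iff_mem).2 hmem
  simp only [map_sub, map_mul, map_pow] at h0
  rw [show (Ideal.Quotient.mk (ReeIdeal s) (X 0) : R s) = x s from rfl,
    show (Ideal.Quotient.mk (ReeIdeal s) (X 1) : R s) = y s from rfl] at h0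
  simp only [ell]
  linear_combination h0

lemma hz_rel (s : ℕ) :
    z s ^ q s = z s + x s ^ q0 s * (x s ^ q0 s * ell s) := by
  have hmem : (X 2 ^ q s - X 2 - X 0 ^ q0 s * (X 1 ^ q s - X 1) :
      MvPolynomial (Fin 3) F) ∈ ReeIdeal s :=
    Ideal.subset_span (by right; rfl)
  have h0 := (Ideal.Quotient.eq_zero_iff_mem).2 hmem
  simp only [map_sub, map_mul, map_pow] at h0
  rw [show (Ideal.Quotient.mk (ReeIdeal s) (X 0) : R s) = x s from rfl,
    show (Ideal.Quotient.mk (ReeIdeal s) (X 1) : R s) = y s from rfl,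
    show (Ideal.Quotient.mk (ReeIdeal s) (X 2) : R s) = z s from rfl] at h0
  have hy := hy_rel s
  linear_combination h0 + x s ^ q0 s * hy

lemma e3q0 (s : ℕ) : 3 * q0 s = 3 ^ (s + 1) := by
  rw [q0, pow_succ]; ring

lemma eq0q0 (s : ℕ) : q0 s * (3 * q0 s) = q s := by
  rw [q0, q, mul_left_comm, ← pow_add, ← pow_succ']
  ring_nf

lemma hw2q (s : ℕ) : w2 s ^ q s = w2 s + y s ^ (3 * q0 s) * ell s := by
  have hq : q s = 3 ^ (2 * s + 1) := rfl
  calc w2 s ^ q s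
      = (x s * y s ^ (3 * q0 s)) ^ q s - (z s ^ (3 * q0 s)) ^ q s := by
        rw [w2, hq, frob_sub]
    _ = x s ^ q s * (y s ^ q s) ^ (3 * q0 s) - (z s ^ q s) ^ (3 * q0 s) := by
        rw [mul_pow, pow_right_comm (y s), pow_right_comm (z s)]
    _ = (x s + ell s) * (y s + x s ^ q0 s * ell s) ^ (3 * q0 s)
        - (z s + x s ^ q0 s * (x s ^ q0 s * ell s)) ^ (3 * q0 s) := by
        rw [hx_rel, hy_rel, hz_rel]
    _ = (x s + ell s) * (y s ^ (3 * q0 s) + (x s ^ q0 s * ell s) ^ (3 * q0 s))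
        - (z s ^ (3 * q0 s) + (x s ^ q0 s * (x s ^ q0 s * ell s)) ^ (3 * q0 s)) := by
        rw [e3q0, frob_add, frob_add]
    _ = w2 s + y s ^ (3 * q0 s) * ell s := by
        simp only [mul_pow, ← pow_mul, eq0q0, hx_rel, w2]
        ring

theorem stmt4 (s : ℕ) (hs : 1 ≤ s) :
    w2 s ^ (q s ^ 2 + 1)
      = (y s ^ q s) ^ (3 * q0 s) * w2 s * ell s ^ q s
        + y s ^ (3 * q0 s) * w2 s * ell s + w2 s ^ 2 := by
  have hq : q s = 3 ^ (2 * s + 1) := rfl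
  have h2 : w2 s ^ q s ^ 2
      = w2 s + y s ^ (3 * q0 s) * ell s
        + (y s ^ q s) ^ (3 * q0 s) * ell s ^ q s := by
    have h1 : w2 s ^ q s ^ 2 = (w2 s ^ q s) ^ q s := by
      rw [← pow_mul, sq]
    rw [h1, hw2q]
    rw [hq, frob_add, mul_pow, ← hq, hw2q, pow_right_comm (y s)]
  calc w2 s ^ (q s ^ 2 + 1) = w2 s ^ q s ^ 2 * w2 s := by rw [pow_succ]
    _ = _ := by rw [h2]; ring
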